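/- If (φ, ψ, χ) and (φ', ψ', χ') are equivalent non-abelian 2-cocycles on B with values in A (via β : B → A), then the map θ : A ⊕ B → A ⊕ B, θ(a + b) = a + β(b) + b, is an isomorphism of associative algebras from A ⊕ B with multiplication twisted by (φ, ψ, χ) to A ⊕ B with multiplication twisted by (φ', ψ', χ'), which is the identity on A and induces the identity on B. -/
import Mathlib


/- STATEMENT 5: if (φ,ψ,χ) and (φ',ψ',χ') are equivalent non-abelian
   2-cocycles via β, then θ(a+b) := a + β(b) + b is an isomorphism of
   associative algebras from A ⊕ B twisted by (φ,ψ,χ) to A ⊕ B twisted by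
   (φ',ψ',χ'), which is the identity on A and induces the identity on B. -/

variable {k : Type*} [Field k]
variable {A B : Type*}
variable [NonUnitalRing A] [Module k A] [SMulCommClass k A A] [IsScalarTower k A A]
variable [NonUnitalRing B] [Module k B] [SMulCommClass k B B] [IsScalarTower k B B]

def IsNonAbCocycle (φ ψ : B →ₗ[k] A →ₗ[k] A) (χ : B →ₗ[k] B →ₗ[k] A) : Prop :=
  (∀ b₁ b₂ a, φ b₁ (φ b₂ a) = φ (b₁ * b₂) a + χ b₁ b₂ * a) ∧
  (∀ b₁ b₂ a, ψ b₁ (ψ b₂ a) = ψ (b₂ * b₁) a + a * χ b₁ b₂) ∧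
  (∀ b₁ b₂ a, φ b₁ (ψ b₂ a) = ψ b₂ (φ b₁ a)) ∧
  (∀ b a₁ a₂, ψ b (a₁ * a₂) = a₁ * ψ b a₂) ∧
  (∀ b a₁ a₂, φ b (a₁ * a₂) = φ b a₁ * a₂) ∧
  (∀ b a₁ a₂, ψ b a₁ * a₂ = a₁ * φ b a₂) ∧
  (∀ b₁ b₂ b₃, -φ b₁ (χ b₂ b₃) + χ (b₁ * b₂) b₃ - χ b₁ (b₂ * b₃) + ψ b₃ (χ b₁ b₂) = 0)

def CocycleEquivVia (β : B →ₗ[k] A)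
    (φ ψ : B →ₗ[k] A →ₗ[k] A) (χ : B →ₗ[k] B →ₗ[k] A)
    (φ' ψ' : B →ₗ[k] A →ₗ[k] A) (χ' : B →ₗ[k] B →ₗ[k] A) : Prop :=
  (∀ b a, φ' b a = φ b a - β b * a) ∧
  (∀ b a, ψ' b a = ψ b a - a * β b) ∧
  (∀ b₁ b₂, χ' b₁ b₂ =
    χ b₁ b₂ - φ b₁ (β b₂) - ψ b₂ (β b₁) + β (b₁ * b₂) + β b₁ * β b₂)

def twMul (φ ψ : B →ₗ[k] A →ₗ[k] A) (χ : B →ₗ[k] B →ₗ[k] A) (x y : A × B) : A × B :=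
  (x.1 * y.1 + φ x.2 y.1 + ψ y.2 x.1 + χ x.2 y.2, x.2 * y.2)

theorem equivalent_cocycles_give_isomorphic_twisted_algebras
    (φ ψ : B →ₗ[k] A →ₗ[k] A) (χ : B →ₗ[k] B →ₗ[k] A)
    (φ' ψ' : B →ₗ[k] A →ₗ[k] A) (χ' : B →ₗ[k] B →ₗ[k] A)
    (hc : IsNonAbCocycle φ ψ χ) (hc' : IsNonAbCocycle φ' ψ' χ')
    (β : B →ₗ[k] A) (heq : CocycleEquivVia β φ ψ χ φ' ψ' χ') :
    -- θ(a + b) = a + β(b) + b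
    let θ : A × B → A × B := fun x => (x.1 + β x.2, x.2)
    -- θ is an algebra morphism from the (φ,ψ,χ)-twisted product to the
    -- (φ',ψ',χ')-twisted product …
    (∀ x y, θ (twMul φ ψ χ x y) = twMul φ' ψ' χ' (θ x) (θ y)) ∧
    (∀ x y, θ (x + y) = θ x + θ y) ∧
    (∀ (c : k) (x), θ (c • x) = c • θ x) ∧
    -- … which is bijective, restricts to the identity on A, and induces the
    -- identity on B
    Function.Bijective θ ∧
    (∀ a : A, θ (a, 0) = (a, 0)) ∧
    (∀ x, (θ x).2 = x.2) := by
  obtain ⟨hφ, hψ, hχ⟩ := heq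
  intro θ
  have hθ : ∀ x : A × B, θ x = (x.1 + β x.2, x.2) := fun _ => rfl
  refine ⟨?_, ?_, ?_, ?_, ?_, ?_⟩
  · rintro ⟨a₁, b₁⟩ ⟨a₂, b₂⟩
    simp only [hθ, twMul, Prod.mk.injEq, and_true]
    rw [map_add, map_add, hφ, hφ, hψ, hψ, hχ]
    noncomm_ring
  · rintro ⟨a₁, b₁⟩ ⟨a₂, b₂⟩
    simp only [hθ, Prod.mk_add_mk, map_add, Prod.mk.injEq, and_true]
    abel
  · rintro c ⟨a, b⟩
    simp [hθ, Prod.smul_mk, smul_add]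
  · constructor
    · rintro ⟨a₁, b₁⟩ ⟨a₂, b₂⟩ h
      simp only [hθ, Prod.mk.injEq] at h
      obtain ⟨h1, h2⟩ := h
      subst h2
      simp only [add_left_inj] at h1
      simp [h1]
    · rintro ⟨a, b⟩
      exact ⟨(a - β b, b), by simp [hθ]⟩
  · intro a; simp [hθ]
  · intro x; rw [hθ]
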